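/- For 1 ≤ s ≤ m and 1 ≤ k ≤ n, the weighted sum F_{s,k} over Up-Right lattice paths from (m,1) to (s,k) of the product of 1/(x_i+y_j) over visited cells (i,j) is a symmetric function of the variables y_1, y_2, ..., y_k. -/

import Mathlib

/-!
A path from `(m, 1)` to `(s, k)` is determined by the interval of rows it occupies in each
column, so `F_{s,k}` is an iterated sum over columns (`columnSum`) in which column `j`
contributes `∏ (x_i + y_j)⁻¹` over its interval. Exchanging `y_j` and `y_{j+1}` affects only two
consecutive columns, and for those the telescoping identity
`(b - a) ∑_{s ≤ u ≤ v} ∏_{[u,v]} (x_i + a)⁻¹ ∏_{[s,u]} (x_i + b)⁻¹`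
`  = ∏_{[s,v]} (x_i + a)⁻¹ - ∏_{[s,v]} (x_i + b)⁻¹`
shows that their joint contribution is symmetric in `a` and `b`. Adjacent transpositions
generate all permutations of `{1, …, k}`.
-/

open Finset

noncomputable section

/-- The field of rational functions over `ℚ` in variables `x_1, x_2, …` and `y_1, y_2, …`. -/
abbrev K : Type := FractionRing (MvPolynomial (ℕ ⊕ ℕ) ℚ)

/-- The variable `x_i` as an element of `K`. -/
def X (i : ℕ) : K := algebraMap (MvPolynomial (ℕ ⊕ ℕ) ℚ) K (MvPolynomial.X (Sum.inl i))

/-- The variable `y_j` as an element of `K`. -/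
def Y (j : ℕ) : K := algebraMap (MvPolynomial (ℕ ⊕ ℕ) ℚ) K (MvPolynomial.X (Sum.inr j))

/-- A step of an Up-Right lattice path: `Up` decreases the first (row) coordinate by one,
`Right` increases the second (column) coordinate by one. -/
def Step (c d : ℕ × ℕ) : Prop :=
  (d.1 + 1 = c.1 ∧ d.2 = c.2) ∨ (d.1 = c.1 ∧ d.2 = c.2 + 1)

/-- `p` is an Up-Right lattice path from cell `A` to cell `B` (listed as its sequence of
visited cells, starting at `A` and ending at `B`). -/
def IsPath (A B : ℕ × ℕ) (p : List (ℕ × ℕ)) : Prop :=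
  p.Chain' Step ∧ p.head? = some A ∧ p.getLast? = some B

/-- All cells of `p` lie in the grid `{1,…,m} × {1,…,n}`. -/
def InGrid (m n : ℕ) (p : List (ℕ × ℕ)) : Prop :=
  ∀ c ∈ p, 1 ≤ c.1 ∧ c.1 ≤ m ∧ 1 ≤ c.2 ∧ c.2 ≤ n

/-- The weight of a path: the product of `1/(x_i + y_j)` over all visited cells `(i,j)`. -/
def pathWeight (x y : ℕ → K) (p : List (ℕ × ℕ)) : K :=
  (p.map fun c => (x c.1 + y c.2)⁻¹).prod

/-- The single-path partition function: the sum of weights of all Up-Right lattice paths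
from `A` to `B` inside the grid `{1,…,m} × {1,…,n}`. -/
def F1 (m n : ℕ) (x y : ℕ → K) (A B : ℕ × ℕ) : K :=
  ∑ᶠ p : {p : List (ℕ × ℕ) // IsPath A B p ∧ InGrid m n p}, pathWeight x y p.1

/-- `γ` is a `k`-tuple of pairwise vertex-disjoint Up-Right lattice paths `γ i : A i → B i`
inside the grid `{1,…,m} × {1,…,n}`. -/
def IsTuple (m n k : ℕ) (A B : Fin k → ℕ × ℕ) (γ : Fin k → List (ℕ × ℕ)) : Prop :=
  (∀ i, IsPath (A i) (B i) (γ i) ∧ InGrid m n (γ i)) ∧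
  (∀ i j, i ≠ j → ∀ c ∈ γ i, c ∉ γ j)

/-- The multi-path partition function: the sum, over all `k`-tuples of pairwise disjoint
Up-Right lattice paths `γ i : A i → B i` in the grid `{1,…,m} × {1,…,n}`, of the product
of `1/(x_i + y_j)` over all visited cells. -/
def Ftuple (m n k : ℕ) (x y : ℕ → K) (A B : Fin k → ℕ × ℕ) : K :=
  ∑ᶠ γ : {γ : Fin k → List (ℕ × ℕ) // IsTuple m n k A B γ}, ∏ i, pathWeight x y (γ.1 i)

section GridPaths

theorem step_iff {B C : ℕ × ℕ} (hC : 1 ≤ C.2) :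
    Step B C ↔ B = (C.1 + 1, C.2) ∨ B = (C.1, C.2 - 1) := by
  obtain ⟨b₁, b₂⟩ := B
  obtain ⟨c₁, c₂⟩ := C
  simp only [Step, Prod.mk.injEq] at hC ⊢
  omega

theorem isPath_iff {A C : ℕ × ℕ} {p : List (ℕ × ℕ)} :
    IsPath A C p ↔ (A = C ∧ p = [C]) ∨ ∃ B q, IsPath A B q ∧ Step B C ∧ p = q ++ [C] := by
  constructor
  · rintro ⟨hchain, hhead, hlast⟩
    rcases p.eq_nil_or_concat' with rfl | ⟨q, c, rfl⟩
    · simp at hhead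
    obtain rfl : c = C := by simpa using hlast
    rcases q.eq_nil_or_concat' with rfl | ⟨r, b, rfl⟩
    · simp_all
    obtain ⟨hchain, -, hstep⟩ := List.isChain_append.1 hchain
    refine Or.inr ⟨b, r ++ [b], ⟨hchain, ?_, by simp⟩, hstep b (by simp) _ rfl, rfl⟩
    simpa [List.head?_append] using hhead
  · rintro (⟨rfl, rfl⟩ | ⟨B, q, ⟨hchain, hhead, hlast⟩, hstep, rfl⟩)
    · exact ⟨List.isChain_singleton A, rfl, rfl⟩
    refine ⟨List.IsChain.append hchain (List.isChain_singleton C) ?_, ?_, by simp⟩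
    · simp_all
    · simp [List.head?_append, hhead]

def gridPaths (m n : ℕ) (A B : ℕ × ℕ) : Set (List (ℕ × ℕ)) :=
  {p | IsPath A B p ∧ InGrid m n p}

theorem F1_eq_finsum_gridPaths (m n : ℕ) (x y : ℕ → K) (A B : ℕ × ℕ) :
    F1 m n x y A B = ∑ᶠ p ∈ gridPaths m n A B, pathWeight x y p :=
  finsum_subtype_eq_finsum_cond _

variable {m n : ℕ} {A C : ℕ × ℕ}

theorem gridPaths_eq_empty (hC : ¬ InGrid m n [C]) : gridPaths m n A C = ∅ := by
  refine Set.eq_empty_of_forall_notMem fun p ⟨⟨_, _, hlast⟩, hp⟩ ↦ hC ?_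
  simpa [InGrid] using hp C (List.mem_of_getLast? hlast)

theorem gridPaths_eq_union (hC : InGrid m n [C]) :
    gridPaths m n A C = {p | A = C ∧ p = [C]} ∪
      (· ++ [C]) '' (gridPaths m n A (C.1 + 1, C.2) ∪ gridPaths m n A (C.1, C.2 - 1)) := by
  have hC₂ : 1 ≤ C.2 := (hC C (by simp)).2.2.1
  have happend {q} : InGrid m n (q ++ [C]) ↔ InGrid m n q := by
    simp only [InGrid, List.forall_mem_append] at hC ⊢
    exact and_iff_left hC
  ext p
  simp only [gridPaths, Set.mem_union, Set.mem_ofPred_eq, Set.mem_image]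
  constructor
  · rintro ⟨hp, hgrid⟩
    rcases isPath_iff.1 hp with h | ⟨B, q, hq, hB, rfl⟩
    · exact Or.inl h
    rw [happend] at hgrid
    rcases (step_iff hC₂).1 hB with rfl | rfl
    exacts [Or.inr ⟨q, Or.inl ⟨hq, hgrid⟩, rfl⟩, Or.inr ⟨q, Or.inr ⟨hq, hgrid⟩, rfl⟩]
  · rintro (⟨rfl, rfl⟩ | ⟨q, hq, rfl⟩)
    · exact ⟨isPath_iff.2 (Or.inl ⟨rfl, rfl⟩), hC⟩
    rw [happend]
    rcases hq with ⟨hq, hgrid⟩ | ⟨hq, hgrid⟩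
    · exact ⟨isPath_iff.2 (Or.inr ⟨_, q, hq, (step_iff hC₂).2 (Or.inl rfl), rfl⟩), hgrid⟩
    · exact ⟨isPath_iff.2 (Or.inr ⟨_, q, hq, (step_iff hC₂).2 (Or.inr rfl), rfl⟩), hgrid⟩

theorem gridPaths_finite (A C : ℕ × ℕ) : (gridPaths m n A C).Finite := by
  induction hN : C.2 + (m + 1 - C.1) using Nat.strong_induction_on generalizing C with
  | _ N ih =>
  by_cases hC : InGrid m n [C]
  · obtain ⟨-, hC₁, hC₂, -⟩ := hC C (by simp)
    rw [gridPaths_eq_union hC]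
    refine ((Set.finite_singleton [C]).subset fun p hp ↦ hp.2).union
      (((ih _ ?_ _ rfl).union (ih _ ?_ _ rfl)).image _) <;> omega
  · rw [gridPaths_eq_empty hC]
    exact Set.finite_empty

theorem pathWeight_append_singleton (x y : ℕ → K) (q : List (ℕ × ℕ)) (c : ℕ × ℕ) :
    pathWeight x y (q ++ [c]) = pathWeight x y q * (x c.1 + y c.2)⁻¹ := by
  simp [pathWeight]

theorem F1_eq_zero (x y : ℕ → K) (hC : ¬ InGrid m n [C]) : F1 m n x y A C = 0 := by
  rw [F1_eq_finsum_gridPaths, gridPaths_eq_empty hC, finsum_mem_empty]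

theorem F1_eq_of_inGrid (x y : ℕ → K) (hC : InGrid m n [C]) :
    F1 m n x y A C = (x C.1 + y C.2)⁻¹ *
      ((if A = C then 1 else 0) + F1 m n x y A (C.1 + 1, C.2) + F1 m n x y A (C.1, C.2 - 1)) := by
  simp only [F1_eq_finsum_gridPaths]
  set P₁ := gridPaths m n A (C.1 + 1, C.2)
  set P₂ := gridPaths m n A (C.1, C.2 - 1)
  have hstart : Disjoint {p | A = C ∧ p = [C]} ((· ++ [C]) '' (P₁ ∪ P₂)) := by
    refine Set.disjoint_left.2 fun p ⟨_, hp⟩ ⟨q, hq, hqp⟩ ↦ ?_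
    obtain rfl : q = [] := by simpa [hp] using hqp
    rcases hq with ⟨⟨-, hhead, -⟩, -⟩ | ⟨⟨-, hhead, -⟩, -⟩ <;> simp at hhead
  have hend : Disjoint P₁ P₂ := by
    refine Set.disjoint_left.2 fun p ⟨⟨_, _, h₁⟩, _⟩ ⟨⟨_, _, h₂⟩, _⟩ ↦ ?_
    simp [h₁] at h₂
  have hfin : ∀ B, (gridPaths m n A B).Finite := gridPaths_finite A
  rw [gridPaths_eq_union hC,
    finsum_mem_union hstart ((Set.finite_singleton [C]).subset fun p hp ↦ hp.2)
      (((hfin _).union (hfin _)).image _),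
    finsum_mem_image (fun _ _ _ _ ↦ List.append_cancel_right),
    finsum_mem_union hend (hfin _) (hfin _)]
  simp only [pathWeight_append_singleton, ← finsum_mem_mul]
  by_cases h : A = C <;> simp [h, pathWeight] <;> ring

end GridPaths

section ColumnSum

variable {L : Type*} [Field L]

def columnWeight (x : ℕ → L) (b : L) (t u : ℕ) : L :=
  ∏ i ∈ Icc t u, (x i + b)⁻¹

theorem columnWeight_of_le (x : ℕ → L) (b : L) {t u : ℕ} (h : t ≤ u) :
    columnWeight x b t u = (x t + b)⁻¹ * columnWeight x b (t + 1) u := by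
  rw [columnWeight, ← insert_Icc_add_one_left_eq_Icc h, prod_insert (by simp), columnWeight]

@[simp]
theorem columnWeight_self (x : ℕ → L) (b : L) (t : ℕ) : columnWeight x b t t = (x t + b)⁻¹ := by
  simp [columnWeight]

theorem columnWeight_succ_right (x : ℕ → L) (b : L) {t u : ℕ} (h : t ≤ u + 1) :
    columnWeight x b t (u + 1) = columnWeight x b t u * (x (u + 1) + b)⁻¹ :=
  prod_Icc_succ_top h _

/-- The weight of the paths from `(m, 1)` to `(t, k)`, summed column by column: such a path
occupies rows `t..u` of column `k` and arrives there from `(u, k - 1)`, or starts at `u = m`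
when `k = 1`. -/
def columnSum (m : ℕ) (x y : ℕ → L) : ℕ → ℕ → L
  | 0, t => if t = m then 1 else 0
  | k + 1, t => ∑ u ∈ Icc t m, columnSum m x y k u * columnWeight x (y (k + 1)) t u

variable (m : ℕ) (x y : ℕ → L)

theorem columnSum_of_lt {t : ℕ} (h : m < t) (k : ℕ) : columnSum m x y k t = 0 := by
  cases k with
  | zero => simp [columnSum, h.ne']
  | succ k => simp [columnSum, Icc_eq_empty_of_lt h]

theorem columnSum_succ (k : ℕ) {t : ℕ} (ht : t ≤ m) :
    columnSum m x y (k + 1) t =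
      (x t + y (k + 1))⁻¹ * (columnSum m x y k t + columnSum m x y (k + 1) (t + 1)) := by
  rw [columnSum, ← insert_Icc_add_one_left_eq_Icc ht, sum_insert (by simp), columnSum, mul_add,
    mul_sum, columnWeight_self, mul_comm]
  congr 1
  refine sum_congr rfl fun u hu ↦ ?_
  rw [columnWeight_of_le x _ (by simp at hu; omega)]
  ring

theorem columnSum_add_two (k t : ℕ) :
    columnSum m x y (k + 2) t = ∑ v ∈ Icc t m, columnSum m x y k v *
      ∑ u ∈ Icc t v, columnWeight x (y (k + 1)) u v * columnWeight x (y (k + 2)) t u := by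
  simp only [columnSum, sum_mul, mul_sum]
  refine sum_comm' (fun u v ↦ ?_) |>.trans (sum_congr rfl fun v _ ↦ sum_congr rfl fun u _ ↦ ?_)
  · simp only [mem_Icc]
    omega
  · ring

theorem columnSum_congr {y' : ℕ → L} {k : ℕ} (h : ∀ i ∈ Icc 1 k, y i = y' i) (t : ℕ) :
    columnSum m x y k t = columnSum m x y' k t := by
  induction k generalizing t with
  | zero => rfl
  | succ k ih =>
    simp only [columnSum]
    rw [h (k + 1) (by simp)]
    refine sum_congr rfl fun u _ ↦ ?_
    rw [ih (fun i hi ↦ h i (by simp at hi ⊢; omega))]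

theorem sub_mul_sum_columnWeight {a b : L} (ha : ∀ i, x i + a ≠ 0) (hb : ∀ i, x i + b ≠ 0)
    (s v : ℕ) :
    (b - a) * ∑ u ∈ Icc s v, columnWeight x a u v * columnWeight x b s u =
      columnWeight x a s v - columnWeight x b s v := by
  have hinv : ∀ i, (b - a) * ((x i + a)⁻¹ * (x i + b)⁻¹) = (x i + a)⁻¹ - (x i + b)⁻¹ := by
    intro i
    field_simp [ha i, hb i]
    ring
  rcases lt_or_ge v s with h | h
  · simp [columnWeight, Icc_eq_empty_of_lt h]
  induction v, h using Nat.le_induction with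
  | base => simp [hinv]
  | succ v hsv ih =>
    have hsum : ∑ u ∈ Icc s v, columnWeight x a u (v + 1) * columnWeight x b s u =
        (x (v + 1) + a)⁻¹ * ∑ u ∈ Icc s v, columnWeight x a u v * columnWeight x b s u := by
      rw [mul_sum]
      refine sum_congr rfl fun u hu ↦ ?_
      rw [columnWeight_succ_right x a (by simp at hu; omega)]
      ring
    rw [sum_Icc_succ_top (by omega), hsum, columnWeight_self,
      columnWeight_succ_right x _ (Nat.le_succ_of_le hsv),
      columnWeight_succ_right x _ (Nat.le_succ_of_le hsv)]
    linear_combination (x (v + 1) + a)⁻¹ * ih + columnWeight x b s v * hinv (v + 1)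

theorem sum_columnWeight_comm {a b : L} (ha : ∀ i, x i + a ≠ 0) (hb : ∀ i, x i + b ≠ 0)
    (hab : a ≠ b) (s v : ℕ) :
    ∑ u ∈ Icc s v, columnWeight x a u v * columnWeight x b s u =
      ∑ u ∈ Icc s v, columnWeight x b u v * columnWeight x a s u := by
  refine mul_left_cancel₀ (sub_ne_zero.2 hab.symm) ?_
  rw [sub_mul_sum_columnWeight x ha hb, ← neg_sub a b, neg_mul, sub_mul_sum_columnWeight x hb ha,
    neg_sub]

theorem columnSum_comp_swap (hxy : ∀ i j, x i + y j ≠ 0) {j : ℕ} (hj : 1 ≤ j)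
    (hy : y j ≠ y (j + 1)) {k : ℕ} (hjk : j + 1 ≤ k) (t : ℕ) :
    columnSum m x (y ∘ Equiv.swap j (j + 1)) k t = columnSum m x y k t := by
  induction k, hjk using Nat.le_induction generalizing t with
  | base =>
    obtain ⟨i, rfl⟩ : ∃ i, j = i + 1 := ⟨j - 1, by omega⟩
    have hlow : ∀ l ∈ Icc 1 i, (y ∘ Equiv.swap (i + 1) (i + 1 + 1)) l = y l := fun l hl ↦ by
      simp only [mem_Icc] at hl
      rw [Function.comp_apply, Equiv.swap_apply_of_ne_of_ne (by omega) (by omega)]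
    simp only [columnSum_add_two, columnSum_congr m x _ hlow, Function.comp_apply,
      Equiv.swap_apply_left, Equiv.swap_apply_right]
    exact sum_congr rfl fun v _ ↦ by
      rw [sum_columnWeight_comm x (hxy · _) (hxy · _) hy.symm]
  | succ k hk ih =>
    simp only [columnSum, Function.comp_apply]
    rw [Equiv.swap_apply_of_ne_of_ne (by omega) (by omega)]
    exact sum_congr rfl fun u _ ↦ by rw [ih]

end ColumnSum

def adjacentSwaps (k : ℕ) : Set (Equiv.Perm ℕ) :=
  {σ | ∃ j, 1 ≤ j ∧ j + 1 ≤ k ∧ σ = Equiv.swap j (j + 1)}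

theorem mem_orbit_closure_adjacentSwaps {k a : ℕ} (ha : a ∈ Icc 1 k) :
    a ∈ MulAction.orbit (Subgroup.closure (adjacentSwaps k)) 1 := by
  induction a with
  | zero => simp at ha
  | succ a ih =>
    simp only [mem_Icc] at ha ih
    rcases Nat.eq_zero_or_pos a with rfl | ha₀
    · exact MulAction.mem_orbit_self 1
    have hswap : Equiv.swap a (a + 1) ∈ Subgroup.closure (adjacentSwaps k) :=
      Subgroup.subset_closure ⟨a, ha₀, ha.2, rfl⟩
    simpa using MulAction.mem_orbit_of_mem_orbit ⟨_, hswap⟩ (ih ⟨ha₀, by omega⟩)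

theorem mem_closure_adjacentSwaps {k : ℕ} {τ : Equiv.Perm ℕ}
    (hτ : ∀ j, j ∉ Icc 1 k → τ j = j) : τ ∈ Subgroup.closure (adjacentSwaps k) := by
  have hS : ∀ σ ∈ adjacentSwaps k, σ.IsSwap := by
    rintro _ ⟨j, -, -, rfl⟩
    exact ⟨j, j + 1, by omega, rfl⟩
  refine (mem_closure_isSwap hS).2 ⟨(Set.finite_Icc 1 k).subset fun a ha ↦ ?_, fun a ↦ ?_⟩
  · by_contra h
    exact ha (hτ a (by simpa using h))
  by_cases ha : a ∈ Icc 1 k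
  · have hτa : τ a ∈ Icc 1 k := by
      by_contra h
      exact h (by rwa [τ.injective (hτ _ h)])
    rw [MulAction.orbit_eq_iff.2 (mem_orbit_closure_adjacentSwaps ha)]
    exact mem_orbit_closure_adjacentSwaps hτa
  · rw [hτ a ha]
    exact MulAction.mem_orbit_self a

theorem columnSum_comp_of_mem_closure {L : Type*} [Field L] (m : ℕ) (x y : ℕ → L)
    (hy : Function.Injective y) (hxy : ∀ i j, x i + y j ≠ 0) {k : ℕ} {σ : Equiv.Perm ℕ}
    (hσ : σ ∈ Subgroup.closure (adjacentSwaps k)) (t : ℕ) :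
    columnSum m x (y ∘ σ) k t = columnSum m x y k t := by
  induction hσ using Subgroup.closure_induction generalizing y with
  | mem σ hσ =>
    obtain ⟨j, hj, hjk, rfl⟩ := hσ
    exact columnSum_comp_swap m x y hxy hj (hy.ne (by omega)) hjk t
  | one => rfl
  | mul σ ρ _ _ ihσ ihρ =>
    rw [Equiv.Perm.coe_mul, ← Function.comp_assoc,
      ihρ _ (hy.comp σ.injective) (fun i j ↦ hxy i (σ j)), ihσ y hy hxy]
  | inv σ _ ih =>
    rw [← ih _ (hy.comp σ⁻¹.injective) (fun i j ↦ hxy i _), Function.comp_assoc,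
      ← Equiv.Perm.coe_mul, inv_mul_cancel, Equiv.Perm.coe_one, Function.comp_id]

theorem F1_eq_columnSum {m n : ℕ} (x y : ℕ → K) {k : ℕ} (hk : 1 ≤ k) (hkn : k ≤ n) {s : ℕ}
    (hs : 1 ≤ s) : F1 m n x y (m, 1) (s, k) = columnSum m x y k s := by
  induction k generalizing s with
  | zero => omega
  | succ k ihk =>
    -- the start cell `(m, 1)` plays the role of `columnSum m x y 0 = [· = m]`
    have hprev : ∀ s, 1 ≤ s → s ≤ m →
        (if ((m, 1) : ℕ × ℕ) = (s, k + 1) then 1 else 0) + F1 m n x y (m, 1) (s, k) =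
          columnSum m x y k s := by
      intro s hs hsm
      rcases Nat.eq_zero_or_pos k with rfl | hk₀
      · rw [F1_eq_zero x y (by simp [InGrid])]
        simp [columnSum, eq_comm]
      · rw [ihk hk₀ (by omega) hs, if_neg (by simp; omega), zero_add]
    induction hd : m + 1 - s generalizing s with
    | zero =>
      rw [F1_eq_zero x y (by simp [InGrid]; omega), columnSum_of_lt m x y (by omega)]
    | succ d ihd =>
      rw [F1_eq_of_inGrid x y (by simp [InGrid]; omega), columnSum_succ m x y k (by omega),
        ← hprev s hs (by omega), ← ihd (s := s + 1) (by omega) (by omega), Nat.add_sub_cancel]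
      ring

theorem Y_injective : Function.Injective Y := fun _ _ h ↦
  Sum.inr_injective (MvPolynomial.X_injective (IsFractionRing.injective _ K h))

theorem X_add_Y_ne_zero (i j : ℕ) : X i + Y j ≠ 0 := by
  rw [X, Y, ← map_add, map_ne_zero_iff _ (IsFractionRing.injective _ K)]
  intro h
  simpa using congrArg (MvPolynomial.eval fun _ ↦ (1 : ℚ)) h

theorem stmt9_general (m n s k : ℕ) (hs : 1 ≤ s) (hk : 1 ≤ k) (hkn : k ≤ n)
    (τ : Equiv.Perm ℕ) (hτ : ∀ j, j ∉ Finset.Icc 1 k → τ j = j) :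
    F1 m n X (fun j => Y (τ j)) (m, 1) (s, k) = F1 m n X Y (m, 1) (s, k) := by
  rw [F1_eq_columnSum _ _ hk hkn hs, F1_eq_columnSum _ _ hk hkn hs]
  exact columnSum_comp_of_mem_closure m X Y Y_injective X_add_Y_ne_zero
    (mem_closure_adjacentSwaps hτ) s

/-- The weighted sum `F_{s,k}` over Up-Right lattice paths from `(m,1)` to `(s,k)` in the
grid `{1,…,m} × {1,…,n}` is a symmetric function of the variables `y_1, y_2, …, y_k`:
it is unchanged under any permutation of the variable indices fixing everything outside
`{1,…,k}`. -/
theorem stmt9 (m n s k : ℕ) (hs : 1 ≤ s) (hsm : s ≤ m) (hk : 1 ≤ k) (hkn : k ≤ n)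
    (τ : Equiv.Perm ℕ) (hτ : ∀ j, j ∉ Finset.Icc 1 k → τ j = j) :
    F1 m n X (fun j => Y (τ j)) (m, 1) (s, k) = F1 m n X Y (m, 1) (s, k) :=
  stmt9_general m n s k hs hk hkn τ hτ
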